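/- arXiv:0704.2562 — 10 statements merged into one kernel-verified Lean document; each statement's English description precedes it below -/
import Mathlib

section
/- Let A, Ã be an adjoint pair of closed densely defined operators on a Hilbert space H with boundary triplet {H⊕K, (Γ₁,Γ₂), (Γ̃₁,Γ̃₂)} satisfying the abstract Green formula (Ã*u,v) − (u,A*v) = (Γ₁u, Γ̃₂v) − (Γ₂u, Γ̃₁v). Let B ∈ L(K,H) and A_B = Ã* restricted to ker(Γ₁ − BΓ₂), and suppose λ ∈ ρ(A_B). Then for every f ∈ Ran(Γ₁ − BΓ₂) there exists a unique u ∈ ker(Ã* − λ) with (Γ₁ − BΓ₂)u = f; consequently the M-function M_B(λ) : Ran(Γ₁ − BΓ₂) → K defined by M_B(λ)(Γ₁ − BΓ₂)u = Γ₂u for u ∈ ker(Ã* − λ) is well defined. -/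
/-- The hypothesis makes `ker S` a complement of `ker Γ`. -/
theorem AddMonoidHom.existsUnique_mem_ker_of_bijective_on_ker {V W E : Type*}
    [AddCommGroup V] [AddCommGroup W] [AddCommGroup E] (S : V →+ W) (Γ : V →+ E)
    (hS : ∀ w, ∃! u, Γ u = 0 ∧ S u = w) {f : E} (hf : ∃ w, Γ w = f) :
    ∃! u, S u = 0 ∧ Γ u = f := by
  obtain ⟨w, rfl⟩ := hf
  obtain ⟨v, ⟨hΓv, hSv⟩, -⟩ := hS (S w)
  refine ⟨w - v, ⟨by simp [hSv], by simp [hΓv]⟩, fun u ⟨hSu, hΓu⟩ => ?_⟩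
  have hwu : w - u = v := (hS (S w)).unique ⟨by simp [hΓu], by simp [hSu]⟩ ⟨hΓv, hSv⟩
  rw [← hwu, sub_sub_cancel]

/-- `T` models `Ã*` on its domain `domT`, and `hres` encodes `λ ∈ ρ(A_B)`: `A_B - λ` is a
bijection from `ker(Γ₁ - BΓ₂)` onto `H`. -/
theorem stmt_0_general {H 𝓗 𝓚 : Type*}
    [NormedAddCommGroup H] [InnerProductSpace ℂ H]
    [NormedAddCommGroup 𝓗] [InnerProductSpace ℂ 𝓗]
    [NormedAddCommGroup 𝓚] [InnerProductSpace ℂ 𝓚]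
    (domT : Submodule ℂ H) (T : domT →ₗ[ℂ] H)
    (Γ₁ : domT →ₗ[ℂ] 𝓗) (Γ₂ : domT →ₗ[ℂ] 𝓚)
    (B : 𝓚 →L[ℂ] 𝓗) (l : ℂ)
    (hres : ∀ h : H, ∃! u : domT, Γ₁ u - B (Γ₂ u) = 0 ∧ T u = l • (u : H) + h)
    (f : 𝓗) (hf : ∃ w : domT, Γ₁ w - B (Γ₂ w) = f) :
    ∃! u : domT, T u = l • (u : H) ∧ Γ₁ u - B (Γ₂ u) = f := by
  let S : domT →+ H := (T - l • domT.subtype).toAddMonoidHom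
  let Γ : domT →+ 𝓗 := (Γ₁ - B.toLinearMap ∘ₗ Γ₂).toAddMonoidHom
  have hS : ∀ h, ∃! u, Γ u = 0 ∧ S u = h := fun h => by
    simpa [S, Γ, sub_eq_iff_eq_add'] using hres h
  simpa [S, Γ, sub_eq_zero] using S.existsUnique_mem_ker_of_bijective_on_ker Γ hS hf

/-- Boundary triplet setting: `T` plays the role of `Ã*` on its domain `domT ⊆ H`,
`Γ₁, Γ₂` the boundary operators, `B ∈ L(𝓚,𝓗)`.  `hres` says `λ ∈ ρ(A_B)`, i.e.
`A_B - λ` is a bijection from `ker(Γ₁ - BΓ₂)` onto `H`.  Conclusion: for every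
`f ∈ Ran(Γ₁ - BΓ₂)` there is a unique `u ∈ ker(Ã* - λ)` with `(Γ₁ - BΓ₂)u = f`;
hence `M_B(λ)(Γ₁ - BΓ₂)u = Γ₂u` is a well-defined map on `Ran(Γ₁ - BΓ₂)`. -/
theorem stmt_0 {H 𝓗 𝓚 : Type*}
    [NormedAddCommGroup H] [InnerProductSpace ℂ H] [CompleteSpace H]
    [NormedAddCommGroup 𝓗] [InnerProductSpace ℂ 𝓗] [CompleteSpace 𝓗]
    [NormedAddCommGroup 𝓚] [InnerProductSpace ℂ 𝓚] [CompleteSpace 𝓚]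
    (domT : Submodule ℂ H) (T : domT →ₗ[ℂ] H)
    (Γ₁ : domT →ₗ[ℂ] 𝓗) (Γ₂ : domT →ₗ[ℂ] 𝓚)
    (B : 𝓚 →L[ℂ] 𝓗) (l : ℂ)
    (hres : ∀ h : H, ∃! u : domT, Γ₁ u - B (Γ₂ u) = 0 ∧ T u = l • (u : H) + h)
    (f : 𝓗) (hf : ∃ w : domT, Γ₁ w - B (Γ₂ w) = f) :
    ∃! u : domT, T u = l • (u : H) ∧ Γ₁ u - B (Γ₂ u) = f :=
  stmt_0_general domT T Γ₁ Γ₂ B l hres f hf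
end

section
/- Under the boundary triplet hypotheses, for λ ∈ ρ(A_B), the solution operator S_{λ,B} : Ran(Γ₁ − BΓ₂) → ker(Ã* − λ) defined by (Ã* − λ)S_{λ,B}f = 0 and (Γ₁ − BΓ₂)S_{λ,B}f = f is well defined, and for any w ∈ D(Ã*) with (Γ₁ − BΓ₂)w = f one has S_{λ,B}f = (I − (A_B − λ)^{-1}(Ã* − λ))w. -/
/-!
Write `L = Ã* - λ` and `Γ = Γ₁ - BΓ₂` on `D(Ã*)`. The resolvent `R = (A_B - λ)⁻¹` is a
right inverse of `L` with values in `ker Γ`, and a left inverse of `L` on `ker Γ`. Hence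
`w - R (L w)` lies in `ker L` and has the same boundary value as `w`; and two elements of
`ker L` with the same boundary value differ by some `v ∈ ker L ∩ ker Γ`, so
`v = R (L v) = R 0 = 0`.
-/

section ResolventSolution

variable {𝕜 M N P : Type*} [Ring 𝕜] [AddCommGroup M] [AddCommGroup N] [AddCommGroup P]
  [Module 𝕜 M] [Module 𝕜 N] [Module 𝕜 P] {L : M →ₗ[𝕜] N} {Γ : M →ₗ[𝕜] P}
  {R : N → M}

theorem apply_sub_resolvent_eq_zero (hR : ∀ h, Γ (R h) = 0 ∧ L (R h) = h) (w : M) :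
    L (w - R (L w)) = 0 := by
  rw [map_sub, (hR _).2, sub_self]

theorem boundary_sub_resolvent_eq (hR : ∀ h, Γ (R h) = 0 ∧ L (R h) = h) (w : M) :
    Γ (w - R (L w)) = Γ w := by
  rw [map_sub, (hR _).1, sub_zero]

theorem eq_zero_of_mem_ker_of_boundary_eq_zero (hRinv : ∀ u, Γ u = 0 → R (L u) = u) {v : M}
    (hLv : L v = 0) (hΓv : Γ v = 0) : v = 0 := by
  have hR0 : R 0 = 0 := by simpa using hRinv 0 (map_zero Γ)
  rw [← hRinv v hΓv, hLv, hR0]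

theorem eq_sub_resolvent_of_boundary_eq (hR : ∀ h, Γ (R h) = 0 ∧ L (R h) = h)
    (hRinv : ∀ u, Γ u = 0 → R (L u) = u) (w : M) {u : M} (hLu : L u = 0) (hΓu : Γ u = Γ w) :
    u = w - R (L w) := by
  rw [← sub_eq_zero]
  apply eq_zero_of_mem_ker_of_boundary_eq_zero hRinv
  · rw [map_sub, hLu, apply_sub_resolvent_eq_zero hR, sub_zero]
  · rw [map_sub, hΓu, boundary_sub_resolvent_eq hR, sub_self]

end ResolventSolution

theorem stmt_1_general {H 𝓗 𝓚 : Type*}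
    [NormedAddCommGroup H] [InnerProductSpace ℂ H]
    [NormedAddCommGroup 𝓗] [InnerProductSpace ℂ 𝓗]
    [NormedAddCommGroup 𝓚] [InnerProductSpace ℂ 𝓚]
    (domT : Submodule ℂ H) (T : domT →ₗ[ℂ] H)
    (Γ₁ : domT →ₗ[ℂ] 𝓗) (Γ₂ : domT →ₗ[ℂ] 𝓚)
    (B : 𝓚 →L[ℂ] 𝓗) (l : ℂ)
    (R : H → domT)
    (hR : ∀ h : H, Γ₁ (R h) - B (Γ₂ (R h)) = 0 ∧ T (R h) = l • ((R h : H)) + h)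
    (hRinv : ∀ u : domT, Γ₁ u - B (Γ₂ u) = 0 → R (T u - l • (u : H)) = u)
    (f : 𝓗) (w : domT) (hw : Γ₁ w - B (Γ₂ w) = f) :
    (∃! u : domT, T u = l • (u : H) ∧ Γ₁ u - B (Γ₂ u) = f) ∧
    ∀ u : domT, T u = l • (u : H) → Γ₁ u - B (Γ₂ u) = f →
      u = w - R (T w - l • (w : H)) := by
  set L : domT →ₗ[ℂ] H := T - l • domT.subtype
  set Γ : domT →ₗ[ℂ] 𝓗 := Γ₁ - B.toLinearMap ∘ₗ Γ₂
  have hL : ∀ u, T u = l • (u : H) ↔ L u = 0 := fun u => sub_eq_zero.symm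
  have hR' : ∀ h, Γ (R h) = 0 ∧ L (R h) = h := fun h =>
    ⟨(hR h).1, sub_eq_iff_eq_add'.mpr (hR h).2⟩
  have hRinv' : ∀ u, Γ u = 0 → R (L u) = u := hRinv
  have hsol : ∀ u, T u = l • (u : H) → Γ₁ u - B (Γ₂ u) = f → u = w - R (L w) :=
    fun u hTu hΓu =>
      eq_sub_resolvent_of_boundary_eq hR' hRinv' w ((hL u).mp hTu) (hΓu.trans hw.symm)
  refine ⟨⟨w - R (L w), ⟨(hL _).mpr (apply_sub_resolvent_eq_zero hR' w), ?_⟩,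
    fun u hu => hsol u hu.1 hu.2⟩, hsol⟩
  exact (boundary_sub_resolvent_eq hR' w).trans hw

/-- Boundary triplet setting; `R` is the resolvent `(A_B - λ)⁻¹` of
`A_B = Ã*|_{ker(Γ₁ - BΓ₂)}` (hypotheses `hR`, `hRinv`).  Conclusion: the solution
operator `S_{λ,B}` is well defined on `Ran(Γ₁ - BΓ₂)` (unique `u ∈ ker(Ã*-λ)` with
`(Γ₁-BΓ₂)u = f`), and for any `w ∈ D(Ã*)` with `(Γ₁-BΓ₂)w = f` it is given by
`S_{λ,B}f = (I - (A_B-λ)⁻¹(Ã*-λ))w`. -/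
theorem stmt_1 {H 𝓗 𝓚 : Type*}
    [NormedAddCommGroup H] [InnerProductSpace ℂ H] [CompleteSpace H]
    [NormedAddCommGroup 𝓗] [InnerProductSpace ℂ 𝓗] [CompleteSpace 𝓗]
    [NormedAddCommGroup 𝓚] [InnerProductSpace ℂ 𝓚] [CompleteSpace 𝓚]
    (domT : Submodule ℂ H) (T : domT →ₗ[ℂ] H)
    (Γ₁ : domT →ₗ[ℂ] 𝓗) (Γ₂ : domT →ₗ[ℂ] 𝓚)
    (B : 𝓚 →L[ℂ] 𝓗) (l : ℂ)
    (R : H → domT)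
    (hR : ∀ h : H, Γ₁ (R h) - B (Γ₂ (R h)) = 0 ∧ T (R h) = l • ((R h : H)) + h)
    (hRinv : ∀ u : domT, Γ₁ u - B (Γ₂ u) = 0 → R (T u - l • (u : H)) = u)
    (f : 𝓗) (w : domT) (hw : Γ₁ w - B (Γ₂ w) = f) :
    (∃! u : domT, T u = l • (u : H) ∧ Γ₁ u - B (Γ₂ u) = f) ∧
    ∀ u : domT, T u = l • (u : H) → Γ₁ u - B (Γ₂ u) = f →
      u = w - R (T w - l • (w : H)) :=
  stmt_1_general domT T Γ₁ Γ₂ B l R hR hRinv f w hw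
end

section
/- Let E = Ran(Γ₁ − BΓ₂) with norm ‖f‖_E² = ‖f‖_H² + ‖S_{λ,B}f‖_F², where F = ker(Ã* − λ) with the graph norm ‖u‖_F² = ‖u‖² + ‖Ã*u‖². Then E and F are Hilbert spaces and S_{λ,B}, regarded as an operator from the boundary space H into D(Ã*) with domain E, is closed. -/
/-!
The eigenvectors of `T` for `λ` form the closed graph of `T` cut by the closed set
`{p | p.2 = λ • p.1}`. The graph-norm bound makes `Γ₁ - BΓ₂` Lipschitz for the graph metric,
so when the graph coordinates `(uₙ, Tuₙ)` of points of the graph of `S_{λ,B}` converge to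
`(u, Tu)`, their boundary values converge to `(Γ₁ - BΓ₂)u`: that graph is closed as well.
-/

open Filter Topology

theorem isClosed_image_prodMk_of_dist_le {α X Y : Type*} [MetricSpace X] [PseudoMetricSpace Y]
    {s : Set α} {f : α → X} {g : α → Y} {C : ℝ} (hs : IsClosed (g '' s))
    (hfg : ∀ a b, dist (f a) (f b) ≤ C * dist (g a) (g b)) :
    IsClosed ((fun a => (f a, g a)) '' s) := by
  refine isSeqClosed_iff_isClosed.mp fun q q₀ hq hlim => ?_
  choose a has hqa using hq
  obtain rfl : (fun n => (f (a n), g (a n))) = q := funext hqa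
  have hg : Tendsto (fun n => g (a n)) atTop (𝓝 q₀.2) := (continuous_snd.tendsto q₀).comp hlim
  obtain ⟨b, hbs, hgb⟩ := hs.mem_of_tendsto hg (Eventually.of_forall fun n => ⟨a n, has n, rfl⟩)
  have hfb : Tendsto (fun n => f (a n)) atTop (𝓝 (f b)) := by
    rw [tendsto_iff_dist_tendsto_zero, ← hgb] at hg
    rw [tendsto_iff_dist_tendsto_zero]
    simpa using squeeze_zero (fun n => dist_nonneg) (fun n => hfg _ _)
      (by simpa using hg.const_mul C)
  have hfq : Tendsto (fun n => f (a n)) atTop (𝓝 q₀.1) := (continuous_fst.tendsto q₀).comp hlim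
  exact ⟨b, hbs, Prod.ext (tendsto_nhds_unique hfb hfq) hgb⟩

theorem norm_le_sqrt_mul_norm_prod {E F G : Type*} [SeminormedAddCommGroup E]
    [SeminormedAddCommGroup F] [SeminormedAddCommGroup G] {c : ℝ} {z : G} {p : E × F}
    (h : ‖z‖ ^ 2 ≤ c * (‖p.1‖ ^ 2 + ‖p.2‖ ^ 2)) : ‖z‖ ≤ √(2 * max c 0) * ‖p‖ := by
  have hsq : ‖z‖ ^ 2 ≤ 2 * max c 0 * ‖p‖ ^ 2 := calc
    ‖z‖ ^ 2 ≤ c * (‖p.1‖ ^ 2 + ‖p.2‖ ^ 2) := h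
    _ ≤ max c 0 * (‖p‖ ^ 2 + ‖p‖ ^ 2) := by
      gcongr
      exacts [le_max_left _ _, norm_fst_le p, norm_snd_le p]
    _ = 2 * max c 0 * ‖p‖ ^ 2 := by ring
  calc ‖z‖ = √(‖z‖ ^ 2) := (Real.sqrt_sq (norm_nonneg _)).symm
    _ ≤ √(2 * max c 0 * ‖p‖ ^ 2) := Real.sqrt_le_sqrt hsq
    _ = √(2 * max c 0) * ‖p‖ := by
      rw [Real.sqrt_mul (by positivity), Real.sqrt_sq (norm_nonneg _)]

theorem dist_le_of_sq_norm_le_graphNorm {R H X : Type*} [Ring R] [SeminormedAddCommGroup H]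
    [Module R H] [SeminormedAddCommGroup X] [Module R X] {D : Submodule R H}
    (T : D →ₗ[R] H) (Γ : D →ₗ[R] X) {c : ℝ}
    (hΓ : ∀ u, ‖Γ u‖ ^ 2 ≤ c * (‖(u : H)‖ ^ 2 + ‖T u‖ ^ 2)) (u v : D) :
    dist (Γ u) (Γ v) ≤ √(2 * max c 0) * dist ((u : H), T u) ((v : H), T v) := by
  rw [dist_eq_norm, dist_eq_norm, ← map_sub]
  simpa using norm_le_sqrt_mul_norm_prod (p := (((u - v : D) : H), T (u - v))) (hΓ (u - v))

theorem isClosed_setOf_graph_eigen {R H : Type*} [Semiring R] [AddCommMonoid H] [Module R H]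
    [TopologicalSpace H] [T2Space H] [ContinuousConstSMul R H] {D : Submodule R H}
    {T : D →ₗ[R] H} (hT : IsClosed {p : H × H | ∃ u : D, p.1 = (u : H) ∧ p.2 = T u}) (l : R) :
    IsClosed {p : H × H | ∃ u : D, T u = l • (u : H) ∧ p.1 = (u : H) ∧ p.2 = T u} := by
  convert hT.inter (isClosed_eq continuous_snd (continuous_fst.const_smul l)) using 1
  ext p
  constructor
  · rintro ⟨u, hu, h1, h2⟩
    exact ⟨⟨u, h1, h2⟩, show p.2 = l • p.1 by rw [h2, h1, hu]⟩
  · rintro ⟨⟨u, h1, h2⟩, hp⟩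
    exact ⟨u, by rw [← h2, show p.2 = l • p.1 from hp, h1], h1, h2⟩

/-- `T` plays `Ã*` on `domT = D(Ã*)`, and `D(Ã*)` with its graph norm is embedded in `H × H`
by `u ↦ (u, Tu)`; the second set is then the graph of `S_{λ,B}`. -/
theorem stmt_3_general {H 𝓗 𝓚 : Type*}
    [NormedAddCommGroup H] [InnerProductSpace ℂ H]
    [NormedAddCommGroup 𝓗] [InnerProductSpace ℂ 𝓗]
    [NormedAddCommGroup 𝓚] [InnerProductSpace ℂ 𝓚]
    (domT : Submodule ℂ H) (T : domT →ₗ[ℂ] H)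
    (Γ₁ : domT →ₗ[ℂ] 𝓗) (Γ₂ : domT →ₗ[ℂ] 𝓚)
    (B : 𝓚 →L[ℂ] 𝓗) (l : ℂ)
    (hTclosed : IsClosed {p : H × H | ∃ u : domT, p.1 = (u : H) ∧ p.2 = T u})
    (hΓcont : ∃ c : ℝ, ∀ u : domT,
      ‖Γ₁ u - B (Γ₂ u)‖ ^ 2 ≤ c * (‖(u : H)‖ ^ 2 + ‖T u‖ ^ 2)) :
    IsClosed {p : H × H | ∃ u : domT, T u = l • (u : H) ∧ p.1 = (u : H) ∧ p.2 = T u} ∧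
    IsClosed {q : 𝓗 × (H × H) | ∃ u : domT, T u = l • (u : H) ∧
      Γ₁ u - B (Γ₂ u) = q.1 ∧ q.2.1 = (u : H) ∧ q.2.2 = T u} := by
  obtain ⟨c, hc⟩ := hΓcont
  have hker := isClosed_setOf_graph_eigen hTclosed l
  refine ⟨hker, ?_⟩
  have hΓ := dist_le_of_sq_norm_le_graphNorm T (Γ₁ - B.toLinearMap ∘ₗ Γ₂) hc
  have himage : (fun u : domT => ((u : H), T u)) '' {u | T u = l • (u : H)} =
      {p : H × H | ∃ u : domT, T u = l • (u : H) ∧ p.1 = (u : H) ∧ p.2 = T u} := by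
    ext p
    simp [Prod.ext_iff, eq_comm]
  have hgraph := isClosed_image_prodMk_of_dist_le (himage ▸ hker) hΓ
  convert hgraph using 1
  ext q
  simp [Prod.ext_iff, eq_comm]

/-- Boundary triplet setting; `Ã*` (i.e. `T`) is closed (`hTclosed`: its graph is
closed in `H × H`), `Γ₁ - BΓ₂` is bounded w.r.t. the graph norm (`hΓcont`), and
`λ ∈ ρ(A_B)` (`hres`).  Conclusion: `F = ker(Ã*-λ)` is a closed (hence complete,
i.e. Hilbert) subspace of `D(Ã*)` with the graph norm, and the solution operator
`S_{λ,B}`, as an operator from the boundary space `𝓗` into `D(Ã*)` with domain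
`E = Ran(Γ₁-BΓ₂)`, is closed: its graph `{(f, (u, Ã*u)) : u ∈ ker(Ã*-λ),
(Γ₁-BΓ₂)u = f}` is closed in `𝓗 × (H × H)`; in particular `E` with the norm
`‖f‖² + ‖S_{λ,B}f‖_F²` is complete, i.e. a Hilbert space. -/
theorem stmt_3 {H 𝓗 𝓚 : Type*}
    [NormedAddCommGroup H] [InnerProductSpace ℂ H] [CompleteSpace H]
    [NormedAddCommGroup 𝓗] [InnerProductSpace ℂ 𝓗] [CompleteSpace 𝓗]
    [NormedAddCommGroup 𝓚] [InnerProductSpace ℂ 𝓚] [CompleteSpace 𝓚]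
    (domT : Submodule ℂ H) (T : domT →ₗ[ℂ] H)
    (Γ₁ : domT →ₗ[ℂ] 𝓗) (Γ₂ : domT →ₗ[ℂ] 𝓚)
    (B : 𝓚 →L[ℂ] 𝓗) (l : ℂ)
    (hTclosed : IsClosed {p : H × H | ∃ u : domT, p.1 = (u : H) ∧ p.2 = T u})
    (hΓcont : ∃ c : ℝ, ∀ u : domT,
      ‖Γ₁ u - B (Γ₂ u)‖ ^ 2 ≤ c * (‖(u : H)‖ ^ 2 + ‖T u‖ ^ 2))
    (hres : ∀ h : H, ∃! u : domT, Γ₁ u - B (Γ₂ u) = 0 ∧ T u = l • (u : H) + h) :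
    IsClosed {p : H × H | ∃ u : domT, T u = l • (u : H) ∧ p.1 = (u : H) ∧ p.2 = T u} ∧
    IsClosed {q : 𝓗 × (H × H) | ∃ u : domT, T u = l • (u : H) ∧
      Γ₁ u - B (Γ₂ u) = q.1 ∧ q.2.1 = (u : H) ∧ q.2.2 = T u} :=
  stmt_3_general domT T Γ₁ Γ₂ B l hTclosed hΓcont
end

section
/- For λ ∈ ρ(A_B) ∩ ρ(A_{B+C}), on Ran(Γ₁ − BΓ₂) the M-functions satisfy the identity M_{B+C}(λ)(I − C M_B(λ)) = M_B(λ). -/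
section BoundaryProblem

variable {R H 𝓗 𝓚 : Type*} [CommRing R] [AddCommGroup H] [Module R H]
  [AddCommGroup 𝓗] [Module R 𝓗] [AddCommGroup 𝓚] [Module R 𝓚]
  {domT : Submodule R H} {T : domT →ₗ[R] H} {Γ₁ : domT →ₗ[R] 𝓗} {Γ₂ : domT →ₗ[R] 𝓚}
  {D : 𝓚 →ₗ[R] 𝓗} {l : R}

/-- If `l` is not an eigenvalue of `T` restricted to `ker (Γ₁ - D Γ₂)`, the boundary value
`Γ₁ u - D (Γ₂ u)` determines `u ∈ ker (T - l)`. -/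
theorem eq_of_boundary_eq_of_existsUnique
    (huniq : ∃! w : domT, Γ₁ w - D (Γ₂ w) = 0 ∧ T w = l • (w : H))
    {u v : domT} (hu : T u = l • (u : H)) (hv : T v = l • (v : H))
    (hbd : Γ₁ v - D (Γ₂ v) = Γ₁ u - D (Γ₂ u)) : v = u := by
  have hdiff : Γ₁ (v - u) - D (Γ₂ (v - u)) = 0 ∧ T (v - u) = l • ((v - u : domT) : H) := by
    refine ⟨?_, ?_⟩
    · rw [map_sub, map_sub, map_sub, ← sub_eq_zero.mpr hbd]
      abel
    · rw [map_sub, hu, hv, Submodule.coe_sub, smul_sub]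
  have hzero : Γ₁ 0 - D (Γ₂ 0) = 0 ∧ T 0 = l • ((0 : domT) : H) := by simp
  exact sub_eq_zero.mp (huniq.unique hdiff hzero)

end BoundaryProblem

theorem stmt_9_general {H 𝓗 𝓚 : Type*}
    [NormedAddCommGroup H] [InnerProductSpace ℂ H]
    [NormedAddCommGroup 𝓗] [InnerProductSpace ℂ 𝓗]
    [NormedAddCommGroup 𝓚] [InnerProductSpace ℂ 𝓚]
    (domT : Submodule ℂ H) (T : domT →ₗ[ℂ] H)
    (Γ₁ : domT →ₗ[ℂ] 𝓗) (Γ₂ : domT →ₗ[ℂ] 𝓚)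
    (B C : 𝓚 →L[ℂ] 𝓗) (l : ℂ)
    (hresBC : ∀ h : H, ∃! u : domT, Γ₁ u - (B + C) (Γ₂ u) = 0 ∧ T u = l • (u : H) + h) :
    ∀ u v : domT, T u = l • (u : H) → T v = l • (v : H) →
      Γ₁ v - (B + C) (Γ₂ v) = (Γ₁ u - B (Γ₂ u)) - C (Γ₂ u) →
      Γ₂ v = Γ₂ u := by
  intro u v hu hv hΓ
  have huniq : ∃! w : domT, Γ₁ w - (B + C).toLinearMap (Γ₂ w) = 0 ∧ T w = l • (w : H) := by
    simpa only [add_zero, ContinuousLinearMap.coe_coe] using hresBC 0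
  have hbd : Γ₁ v - (B + C) (Γ₂ v) = Γ₁ u - (B + C) (Γ₂ u) := by
    rw [hΓ, add_apply, sub_sub]
  exact congrArg Γ₂ (eq_of_boundary_eq_of_existsUnique huniq hu hv hbd)

/-- Boundary triplet setting; `λ ∈ ρ(A_B) ∩ ρ(A_{B+C})`.  The identity
`M_{B+C}(λ)(I - C M_B(λ)) = M_B(λ)` on `Ran(Γ₁ - BΓ₂)`: if `u ∈ ker(Ã*-λ)`
realises `M_B(λ)f = Γ₂u` for `f = (Γ₁-BΓ₂)u`, and `v ∈ ker(Ã*-λ)` realises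
`M_{B+C}(λ)` applied to `(I - C M_B(λ))f = f - C Γ₂ u`, then `Γ₂ v = Γ₂ u`. -/
theorem stmt_9 {H 𝓗 𝓚 : Type*}
    [NormedAddCommGroup H] [InnerProductSpace ℂ H] [CompleteSpace H]
    [NormedAddCommGroup 𝓗] [InnerProductSpace ℂ 𝓗] [CompleteSpace 𝓗]
    [NormedAddCommGroup 𝓚] [InnerProductSpace ℂ 𝓚] [CompleteSpace 𝓚]
    (domT : Submodule ℂ H) (T : domT →ₗ[ℂ] H)
    (Γ₁ : domT →ₗ[ℂ] 𝓗) (Γ₂ : domT →ₗ[ℂ] 𝓚)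
    (B C : 𝓚 →L[ℂ] 𝓗) (l : ℂ)
    (hresB : ∀ h : H, ∃! u : domT, Γ₁ u - B (Γ₂ u) = 0 ∧ T u = l • (u : H) + h)
    (hresBC : ∀ h : H, ∃! u : domT, Γ₁ u - (B + C) (Γ₂ u) = 0 ∧ T u = l • (u : H) + h) :
    ∀ u v : domT, T u = l • (u : H) → T v = l • (v : H) →
      Γ₁ v - (B + C) (Γ₂ v) = (Γ₁ u - B (Γ₂ u)) - C (Γ₂ u) →
      Γ₂ v = Γ₂ u :=
  stmt_9_general domT T Γ₁ Γ₂ B C l hresBC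
end

section
/- For λ ∈ ρ(A_B) ∩ ρ(A_{B+C}), the solution operators satisfy S_{λ,B+C}(I − CΓ₂S_{λ,B}) = S_{λ,B} on Ran(Γ₁ − BΓ₂). -/
/-! `v - u` solves the homogeneous boundary value problem for `B + C`, whose only solution
is `0` because `λ ∈ ρ(A_{B+C})`. -/

theorem stmt_10_general {H 𝓗 𝓚 : Type*}
    [NormedAddCommGroup H] [InnerProductSpace ℂ H]
    [NormedAddCommGroup 𝓗] [InnerProductSpace ℂ 𝓗]
    [NormedAddCommGroup 𝓚] [InnerProductSpace ℂ 𝓚]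
    (domT : Submodule ℂ H) (T : domT →ₗ[ℂ] H)
    (Γ₁ : domT →ₗ[ℂ] 𝓗) (Γ₂ : domT →ₗ[ℂ] 𝓚)
    (B C : 𝓚 →L[ℂ] 𝓗) (l : ℂ)
    (hresBC : ∀ h : H, ∃! u : domT, Γ₁ u - (B + C) (Γ₂ u) = 0 ∧ T u = l • (u : H) + h) :
    ∀ u v : domT, T u = l • (u : H) → T v = l • (v : H) →
      Γ₁ v - (B + C) (Γ₂ v) = (Γ₁ u - B (Γ₂ u)) - C (Γ₂ u) →
      v = u := by
  intro u v hu hv hbd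
  have hboundary : Γ₁ (v - u) - (B + C) (Γ₂ (v - u)) = 0 := by
    rw [map_sub, map_sub, map_sub, sub_sub_sub_comm, hbd, add_apply]
    abel
  have heigen : T (v - u) = l • ((v - u : domT) : H) + 0 := by
    rw [map_sub, hu, hv, add_zero, Submodule.coe_sub, smul_sub]
  have hzero : Γ₁ 0 - (B + C) (Γ₂ 0) = 0 ∧ T 0 = l • ((0 : domT) : H) + 0 := by
    simp
  exact sub_eq_zero.mp ((hresBC 0).unique ⟨hboundary, heigen⟩ hzero)

/-- Boundary triplet setting; `λ ∈ ρ(A_B) ∩ ρ(A_{B+C})`.  The identity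
`S_{λ,B+C}(I - CΓ₂S_{λ,B}) = S_{λ,B}` on `Ran(Γ₁ - BΓ₂)`: if `u ∈ ker(Ã*-λ)`
realises `S_{λ,B}f = u` for `f = (Γ₁-BΓ₂)u`, and `v ∈ ker(Ã*-λ)` realises
`S_{λ,B+C}` applied to `(I - C Γ₂ S_{λ,B})f = f - C Γ₂ u`, then `v = u`, i.e. `S_{λ,B+C}(I - CΓ₂S_{λ,B}) = S_{λ,B}` on `Ran(Γ₁ - BΓ₂)`. -/
theorem stmt_10 {H 𝓗 𝓚 : Type*}
    [NormedAddCommGroup H] [InnerProductSpace ℂ H] [CompleteSpace H]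
    [NormedAddCommGroup 𝓗] [InnerProductSpace ℂ 𝓗] [CompleteSpace 𝓗]
    [NormedAddCommGroup 𝓚] [InnerProductSpace ℂ 𝓚] [CompleteSpace 𝓚]
    (domT : Submodule ℂ H) (T : domT →ₗ[ℂ] H)
    (Γ₁ : domT →ₗ[ℂ] 𝓗) (Γ₂ : domT →ₗ[ℂ] 𝓚)
    (B C : 𝓚 →L[ℂ] 𝓗) (l : ℂ)
    (hresB : ∀ h : H, ∃! u : domT, Γ₁ u - B (Γ₂ u) = 0 ∧ T u = l • (u : H) + h)
    (hresBC : ∀ h : H, ∃! u : domT, Γ₁ u - (B + C) (Γ₂ u) = 0 ∧ T u = l • (u : H) + h) :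
    ∀ u v : domT, T u = l • (u : H) → T v = l • (v : H) →
      Γ₁ v - (B + C) (Γ₂ v) = (Γ₁ u - B (Γ₂ u)) - C (Γ₂ u) →
      v = u :=
  stmt_10_general domT T Γ₁ Γ₂ B C l hresBC
end

section
/- For λ, λ₀ ∈ ρ(A_B), the M-function has the representation M_B(λ) = Γ₂(I + (λ − λ₀)(A_B − λ)^{-1}) S_{λ₀,B} = Γ₂ (A_B − λ₀)(A_B − λ)^{-1} S_{λ₀,B} on Ran(Γ₁ − BΓ₂). -/
/-!
If `u₀` and `u` solve `T v = l₀ v`, `T v = l v` with the same boundary data `f`, then `u - u₀`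
has homogeneous boundary data and solves `(T - l) v = (l - l₀) u₀`; so does `(l - l₀) R u₀`, where
`R` is the resolvent of the realization at `l`. Uniqueness of that solution gives
`u = u₀ + (l - l₀) R u₀`, and applying `Γ₂` yields both formulas for `M_B(l) f = Γ₂ u`.
-/

section ResolventSolution

variable {𝕜 H 𝓗 : Type*} [CommRing 𝕜] [AddCommGroup H] [Module 𝕜 H]
  [AddCommGroup 𝓗] [Module 𝕜 𝓗] {D : Submodule 𝕜 H} (T : D →ₗ[𝕜] H) (Γ : D →ₗ[𝕜] 𝓗)

/-- `v` lies in the domain of the realization `T|_{ker Γ}` and `(T - l) v = h`. -/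
def IsResolventSolution (l : 𝕜) (h : H) (v : D) : Prop :=
  Γ v = 0 ∧ T v = l • (v : H) + h

variable {T Γ}

theorem IsResolventSolution.smul {l : 𝕜} {h : H} {v : D} (c : 𝕜)
    (hv : IsResolventSolution T Γ l h v) : IsResolventSolution T Γ l (c • h) (c • v) := by
  obtain ⟨hΓ, hT⟩ := hv
  refine ⟨by rw [map_smul, hΓ, smul_zero], ?_⟩
  rw [map_smul, hT, Submodule.coe_smul, smul_add, smul_comm]

theorem isResolventSolution_sub {l l₀ : 𝕜} {u u₀ : D} (hu : T u = l • (u : H))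
    (hu₀ : T u₀ = l₀ • (u₀ : H)) (hΓ : Γ u = Γ u₀) :
    IsResolventSolution T Γ l ((l - l₀) • (u₀ : H)) (u - u₀) := by
  refine ⟨by rw [map_sub, hΓ, sub_self], ?_⟩
  rw [map_sub, hu, hu₀, Submodule.coe_sub]
  module

theorem eq_add_smul_resolvent_of_existsUnique {l l₀ : 𝕜} {R : H → D}
    (hres : ∀ h : H, ∃! v : D, IsResolventSolution T Γ l h v)
    (hR : ∀ h : H, IsResolventSolution T Γ l h (R h)) {u u₀ : D}
    (hu : T u = l • (u : H)) (hu₀ : T u₀ = l₀ • (u₀ : H)) (hΓ : Γ u = Γ u₀) :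
    u = u₀ + (l - l₀) • R u₀ := by
  have hdiff := isResolventSolution_sub hu hu₀ hΓ
  have hresolvent := (hR (u₀ : H)).smul (l - l₀)
  rw [← (hres _).unique hdiff hresolvent]
  abel

end ResolventSolution

theorem stmt_11_general {H 𝓗 𝓚 : Type*}
    [NormedAddCommGroup H] [InnerProductSpace ℂ H]
    [NormedAddCommGroup 𝓗] [InnerProductSpace ℂ 𝓗]
    [NormedAddCommGroup 𝓚] [InnerProductSpace ℂ 𝓚]
    (domT : Submodule ℂ H) (T : domT →ₗ[ℂ] H)
    (Γ₁ : domT →ₗ[ℂ] 𝓗) (Γ₂ : domT →ₗ[ℂ] 𝓚)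
    (B : 𝓚 →L[ℂ] 𝓗) (l l₀ : ℂ)
    (hres : ∀ h : H, ∃! u : domT, Γ₁ u - B (Γ₂ u) = 0 ∧ T u = l • (u : H) + h)
    (R : H → domT)
    (hR : ∀ h : H, Γ₁ (R h) - B (Γ₂ (R h)) = 0 ∧ T (R h) = l • ((R h : H)) + h)
    (f : 𝓗) (u u₀ : domT)
    (hu₀ : T u₀ = l₀ • (u₀ : H) ∧ Γ₁ u₀ - B (Γ₂ u₀) = f)
    (hu : T u = l • (u : H) ∧ Γ₁ u - B (Γ₂ u) = f) :
    Γ₂ u = Γ₂ (u₀ + (l - l₀) • R ((u₀ : H))) ∧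
    Γ₂ u = Γ₂ u₀ + (l - l₀) • Γ₂ (R ((u₀ : H))) := by
  have key : u = u₀ + (l - l₀) • R u₀ :=
    eq_add_smul_resolvent_of_existsUnique (Γ := Γ₁ - (B : 𝓚 →ₗ[ℂ] 𝓗) ∘ₗ Γ₂)
      hres hR hu.1 hu₀.1 (hu.2.trans hu₀.2.symm)
  exact ⟨congrArg Γ₂ key, by rw [key, map_add, map_smul]⟩

/-- Boundary triplet setting; `λ, λ₀ ∈ ρ(A_B)`, `R = (A_B - λ)⁻¹`.  Representation
`M_B(λ) = Γ₂(I + (λ-λ₀)(A_B-λ)⁻¹)S_{λ₀,B} = Γ₂(A_B-λ₀)(A_B-λ)⁻¹S_{λ₀,B}` on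
`Ran(Γ₁ - BΓ₂)`: if `u₀ = S_{λ₀,B}f` and `u = S_{λ,B}f` (so `M_B(λ)f = Γ₂u`),
then `Γ₂ u = Γ₂ (u₀ + (λ-λ₀) R u₀) = Γ₂ u₀ + (λ-λ₀) Γ₂ (R u₀)`. -/
theorem stmt_11 {H 𝓗 𝓚 : Type*}
    [NormedAddCommGroup H] [InnerProductSpace ℂ H] [CompleteSpace H]
    [NormedAddCommGroup 𝓗] [InnerProductSpace ℂ 𝓗] [CompleteSpace 𝓗]
    [NormedAddCommGroup 𝓚] [InnerProductSpace ℂ 𝓚] [CompleteSpace 𝓚]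
    (domT : Submodule ℂ H) (T : domT →ₗ[ℂ] H)
    (Γ₁ : domT →ₗ[ℂ] 𝓗) (Γ₂ : domT →ₗ[ℂ] 𝓚)
    (B : 𝓚 →L[ℂ] 𝓗) (l l₀ : ℂ)
    (hres : ∀ h : H, ∃! u : domT, Γ₁ u - B (Γ₂ u) = 0 ∧ T u = l • (u : H) + h)
    (hres₀ : ∀ h : H, ∃! u : domT, Γ₁ u - B (Γ₂ u) = 0 ∧ T u = l₀ • (u : H) + h)
    (R : H → domT)
    (hR : ∀ h : H, Γ₁ (R h) - B (Γ₂ (R h)) = 0 ∧ T (R h) = l • ((R h : H)) + h)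
    (f : 𝓗) (u u₀ : domT)
    (hu₀ : T u₀ = l₀ • (u₀ : H) ∧ Γ₁ u₀ - B (Γ₂ u₀) = f)
    (hu : T u = l • (u : H) ∧ Γ₁ u - B (Γ₂ u) = f) :
    Γ₂ u = Γ₂ (u₀ + (l - l₀) • R ((u₀ : H))) ∧
    Γ₂ u = Γ₂ u₀ + (l - l₀) • Γ₂ (R ((u₀ : H))) :=
  stmt_11_general domT T Γ₁ Γ₂ B l l₀ hres R hR f u u₀ hu₀ hu
end

section
/- (Krein formula) Let B, C ∈ L(K,H) and λ ∈ ρ(A_B) ∩ ρ(A_C) ∩ ρ(A_{B+C}). Then (A_B − λ)^{-1} = (A_C − λ)^{-1} − S_{λ,B+C}(I − C M_B(λ))(Γ₁ − BΓ₂)(A_C − λ)^{-1}, and moreover (Γ₁ − BΓ₂)(A_C − λ)^{-1} = (C − B)Γ₂(A_C − λ)^{-1}. -/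
/-! Both `u` and `v` solve the eigenvalue problem `T w = λ w`, and by construction their boundary
values for `Γ₁ - (B + C)Γ₂` agree; since `λ ∈ ρ(A_{B+C})` this forces `u = v`. Then `x - v` has
vanishing boundary value for `Γ₁ - BΓ₂` and solves `T w = λ w + h`, so `λ ∈ ρ(A_B)` gives
`x - v = y`. -/

section BoundaryValueProblem

variable {R H 𝓗 𝓚 : Type*} [CommRing R]
  [AddCommGroup H] [Module R H] [AddCommGroup 𝓗] [Module R 𝓗] [AddCommGroup 𝓚] [Module R 𝓚]
  {domT : Submodule R H} {T : domT →ₗ[R] H} {Γ₁ : domT →ₗ[R] 𝓗} {Γ₂ : domT →ₗ[R] 𝓚}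
  {B : 𝓚 →ₗ[R] 𝓗} {l : R}

theorem sub_solves_of_boundary_eq {h : H} {x v : domT}
    (hx : T x = l • (x : H) + h) (hv : T v = l • (v : H))
    (hΓ : Γ₁ x - B (Γ₂ x) = Γ₁ v - B (Γ₂ v)) :
    Γ₁ (x - v) - B (Γ₂ (x - v)) = 0 ∧ T (x - v) = l • ((x - v : domT) : H) + h := by
  constructor
  · rw [map_sub, map_sub, map_sub, ← sub_eq_zero.mpr hΓ]
    abel
  · rw [map_sub, hx, hv, Submodule.coe_sub, smul_sub]
    abel

theorem eq_of_boundary_eq_of_existsUnique_s12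
    (huniq : ∃! w : domT, Γ₁ w - B (Γ₂ w) = 0 ∧ T w = l • (w : H) + 0) {a b : domT}
    (ha : T a = l • (a : H)) (hb : T b = l • (b : H))
    (hΓ : Γ₁ a - B (Γ₂ a) = Γ₁ b - B (Γ₂ b)) : a = b := by
  have hsub := sub_solves_of_boundary_eq (by rw [ha, add_zero]) hb hΓ
  exact sub_eq_zero.mp (huniq.unique hsub ⟨by simp, by simp⟩)

end BoundaryValueProblem

theorem stmt_12_general {H 𝓗 𝓚 : Type*}
    [NormedAddCommGroup H] [InnerProductSpace ℂ H]
    [NormedAddCommGroup 𝓗] [InnerProductSpace ℂ 𝓗]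
    [NormedAddCommGroup 𝓚] [InnerProductSpace ℂ 𝓚]
    (domT : Submodule ℂ H) (T : domT →ₗ[ℂ] H)
    (Γ₁ : domT →ₗ[ℂ] 𝓗) (Γ₂ : domT →ₗ[ℂ] 𝓚)
    (B C : 𝓚 →L[ℂ] 𝓗) (l : ℂ)
    (hresB : ∀ h : H, ∃! u : domT, Γ₁ u - B (Γ₂ u) = 0 ∧ T u = l • (u : H) + h)
    (hresBC : ∀ h : H, ∃! u : domT, Γ₁ u - (B + C) (Γ₂ u) = 0 ∧ T u = l • (u : H) + h)
    (h : H) (x y u v : domT)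
    (hx : Γ₁ x - C (Γ₂ x) = 0 ∧ T x = l • (x : H) + h)
    (hy : Γ₁ y - B (Γ₂ y) = 0 ∧ T y = l • (y : H) + h)
    (hu : T u = l • (u : H) ∧ Γ₁ u - B (Γ₂ u) = Γ₁ x - B (Γ₂ x))
    (hv : T v = l • (v : H) ∧
      Γ₁ v - (B + C) (Γ₂ v) = (Γ₁ x - B (Γ₂ x)) - C (Γ₂ u)) :
    (y : H) = (x : H) - (v : H) ∧
    Γ₁ x - B (Γ₂ x) = C (Γ₂ x) - B (Γ₂ x) := by
  have huv : u = v :=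
    eq_of_boundary_eq_of_existsUnique_s12 (B := ((B + C : 𝓚 →L[ℂ] 𝓗) : 𝓚 →ₗ[ℂ] 𝓗))
      (hresBC 0) hu.1 hv.1 (by
        simp only [ContinuousLinearMap.coe_coe]
        rw [hv.2, ← hu.2, add_apply]
        abel)
  have hxv : x - v = y :=
    (hresB h).unique
      (sub_solves_of_boundary_eq (B := (B : 𝓚 →ₗ[ℂ] 𝓗)) hx.2 hv.1 (huv ▸ hu.2).symm) hy
  exact ⟨by rw [← hxv, Submodule.coe_sub], by rw [sub_eq_zero.mp hx.1]⟩

/-- Kreĭn formula.  Boundary triplet setting; `λ ∈ ρ(A_B) ∩ ρ(A_C) ∩ ρ(A_{B+C})`.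
For `h ∈ H` let `x = (A_C-λ)⁻¹h`, `y = (A_B-λ)⁻¹h`, let `u = S_{λ,B}((Γ₁-BΓ₂)x)`
(so `M_B(λ)(Γ₁-BΓ₂)x = Γ₂u`) and `v = S_{λ,B+C}((I - C M_B(λ))(Γ₁-BΓ₂)x)`.  Then
`y = x - v`, i.e. `(A_B-λ)⁻¹ = (A_C-λ)⁻¹ - S_{λ,B+C}(I-CM_B(λ))(Γ₁-BΓ₂)(A_C-λ)⁻¹`;
moreover `(Γ₁-BΓ₂)(A_C-λ)⁻¹h = (C-B)Γ₂(A_C-λ)⁻¹h`. -/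
theorem stmt_12 {H 𝓗 𝓚 : Type*}
    [NormedAddCommGroup H] [InnerProductSpace ℂ H] [CompleteSpace H]
    [NormedAddCommGroup 𝓗] [InnerProductSpace ℂ 𝓗] [CompleteSpace 𝓗]
    [NormedAddCommGroup 𝓚] [InnerProductSpace ℂ 𝓚] [CompleteSpace 𝓚]
    (domT : Submodule ℂ H) (T : domT →ₗ[ℂ] H)
    (Γ₁ : domT →ₗ[ℂ] 𝓗) (Γ₂ : domT →ₗ[ℂ] 𝓚)
    (B C : 𝓚 →L[ℂ] 𝓗) (l : ℂ)
    (hresB : ∀ h : H, ∃! u : domT, Γ₁ u - B (Γ₂ u) = 0 ∧ T u = l • (u : H) + h)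
    (hresC : ∀ h : H, ∃! u : domT, Γ₁ u - C (Γ₂ u) = 0 ∧ T u = l • (u : H) + h)
    (hresBC : ∀ h : H, ∃! u : domT, Γ₁ u - (B + C) (Γ₂ u) = 0 ∧ T u = l • (u : H) + h)
    (h : H) (x y u v : domT)
    (hx : Γ₁ x - C (Γ₂ x) = 0 ∧ T x = l • (x : H) + h)
    (hy : Γ₁ y - B (Γ₂ y) = 0 ∧ T y = l • (y : H) + h)
    (hu : T u = l • (u : H) ∧ Γ₁ u - B (Γ₂ u) = Γ₁ x - B (Γ₂ x))
    (hv : T v = l • (v : H) ∧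
      Γ₁ v - (B + C) (Γ₂ v) = (Γ₁ x - B (Γ₂ x)) - C (Γ₂ u)) :
    (y : H) = (x : H) - (v : H) ∧
    Γ₁ x - B (Γ₂ x) = C (Γ₂ x) - B (Γ₂ x) :=
  stmt_12_general domT T Γ₁ Γ₂ B C l hresB hresBC h x y u v hx hy hu hv
end

section
/- Let C ∈ L(K,H) and λ ∈ ρ(A₀) ∩ ρ(A_C), where A₀ = Ã*|_{ker Γ₁}. Then (A₀ − λ)^{-1} = (A_C − λ)^{-1} − S_{λ,C}(I − C M₀(λ)) Γ₁ (A_C − λ)^{-1}. -/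
/-! `u` and `v` solve the same homogeneous problem with the same boundary value for
`Γ₁ - CΓ₂`, so uniqueness for `A_C` gives `u = v`. Then `x - v` and `y` both solve
`(T - λ)w = h` with `Γ₁ w = Γ₁ x - Γ₁ u = 0`, so uniqueness for `A₀` gives `y = x - v`. -/

theorem eq_of_existsUnique_homogeneous {R E W : Type*} [Ring R] [AddCommGroup E] [Module R E]
    [AddCommGroup W] [Module R W] {D : Submodule R E} (T : D →ₗ[R] E) (B : D →ₗ[R] W) (l : R)
    (huniq : ∃! w : D, B w = 0 ∧ T w = l • (w : E) + 0) {a b : D} (hB : B a = B b)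
    (hT : T a - l • (a : E) = T b - l • (b : E)) : a = b := by
  have hdiff : B (a - b) = 0 ∧ T (a - b) = l • ((a - b : D) : E) + 0 := by
    refine ⟨by rw [map_sub, hB, sub_self], ?_⟩
    rw [map_sub, Submodule.coe_sub, smul_sub, add_zero]
    exact sub_eq_sub_iff_sub_eq_sub.mp hT
  exact sub_eq_zero.mp (huniq.unique hdiff ⟨map_zero B, by simp⟩)

theorem stmt_13_general {H 𝓗 𝓚 : Type*}
    [NormedAddCommGroup H] [InnerProductSpace ℂ H]
    [NormedAddCommGroup 𝓗] [InnerProductSpace ℂ 𝓗]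
    [NormedAddCommGroup 𝓚] [InnerProductSpace ℂ 𝓚]
    (domT : Submodule ℂ H) (T : domT →ₗ[ℂ] H)
    (Γ₁ : domT →ₗ[ℂ] 𝓗) (Γ₂ : domT →ₗ[ℂ] 𝓚)
    (C : 𝓚 →L[ℂ] 𝓗) (l : ℂ)
    (hres₀ : ∀ h : H, ∃! u : domT, Γ₁ u = 0 ∧ T u = l • (u : H) + h)
    (hresC : ∀ h : H, ∃! u : domT, Γ₁ u - C (Γ₂ u) = 0 ∧ T u = l • (u : H) + h)
    (h : H) (x y u v : domT)
    (hx : Γ₁ x - C (Γ₂ x) = 0 ∧ T x = l • (x : H) + h)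
    (hy : Γ₁ y = 0 ∧ T y = l • (y : H) + h)
    (hu : T u = l • (u : H) ∧ Γ₁ u = Γ₁ x)
    (hv : T v = l • (v : H) ∧ Γ₁ v - C (Γ₂ v) = Γ₁ x - C (Γ₂ u)) :
    (y : H) = (x : H) - (v : H) := by
  have huv : u = v :=
    eq_of_existsUnique_homogeneous T (Γ₁ - (C : 𝓚 →ₗ[ℂ] 𝓗) ∘ₗ Γ₂) l (hresC 0)
      (by simp only [LinearMap.sub_apply, LinearMap.comp_apply, ContinuousLinearMap.coe_coe,
        hv.2, hu.2])
      (by rw [hu.1, hv.1, sub_self, sub_self])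
  have hyxv : y = x - v :=
    eq_of_existsUnique_homogeneous T Γ₁ l (hres₀ 0)
      (by rw [hy.1, map_sub, ← huv, hu.2, sub_self])
      (by rw [hy.2, map_sub, Submodule.coe_sub, hx.2, hv.1, smul_sub]; abel)
  rw [hyxv, Submodule.coe_sub]

/-- Kreĭn formula for `B = 0`.  Boundary triplet setting; `A₀ = Ã*|_{ker Γ₁}`,
`A_C = Ã*|_{ker(Γ₁ - CΓ₂)}`, `λ ∈ ρ(A₀) ∩ ρ(A_C)`.  For `h ∈ H` let
`x = (A_C-λ)⁻¹h`, `y = (A₀-λ)⁻¹h`, `u = S_{λ,0}(Γ₁ x)` (so `M₀(λ)Γ₁x = Γ₂u`)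
and `v = S_{λ,C}((I - C M₀(λ))Γ₁ x)`.  Then `y = x - v`, i.e.
`(A₀-λ)⁻¹ = (A_C-λ)⁻¹ - S_{λ,C}(I - C M₀(λ))Γ₁(A_C-λ)⁻¹`. -/
theorem stmt_13 {H 𝓗 𝓚 : Type*}
    [NormedAddCommGroup H] [InnerProductSpace ℂ H] [CompleteSpace H]
    [NormedAddCommGroup 𝓗] [InnerProductSpace ℂ 𝓗] [CompleteSpace 𝓗]
    [NormedAddCommGroup 𝓚] [InnerProductSpace ℂ 𝓚] [CompleteSpace 𝓚]
    (domT : Submodule ℂ H) (T : domT →ₗ[ℂ] H)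
    (Γ₁ : domT →ₗ[ℂ] 𝓗) (Γ₂ : domT →ₗ[ℂ] 𝓚)
    (C : 𝓚 →L[ℂ] 𝓗) (l : ℂ)
    (hres₀ : ∀ h : H, ∃! u : domT, Γ₁ u = 0 ∧ T u = l • (u : H) + h)
    (hresC : ∀ h : H, ∃! u : domT, Γ₁ u - C (Γ₂ u) = 0 ∧ T u = l • (u : H) + h)
    (h : H) (x y u v : domT)
    (hx : Γ₁ x - C (Γ₂ x) = 0 ∧ T x = l • (x : H) + h)
    (hy : Γ₁ y = 0 ∧ T y = l • (y : H) + h)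
    (hu : T u = l • (u : H) ∧ Γ₁ u = Γ₁ x)
    (hv : T v = l • (v : H) ∧ Γ₁ v - C (Γ₂ v) = Γ₁ x - C (Γ₂ u)) :
    (y : H) = (x : H) - (v : H) :=
  stmt_13_general domT T Γ₁ Γ₂ C l hres₀ hresC h x y u v hx hy hu hv
end

section
/- If there exists C ∈ L(K,H) with μ ∈ ρ(A_C), then the unique continuation property holds for Ã* − μ, i.e. ker(Ã* − μ) ∩ ker Γ₁ ∩ ker Γ₂ = {0}. -/
open scoped InnerProductSpace

theorem stmt_16_general {H 𝓗 𝓚 : Type*}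
    [NormedAddCommGroup H] [InnerProductSpace ℂ H]
    [NormedAddCommGroup 𝓗] [InnerProductSpace ℂ 𝓗]
    [NormedAddCommGroup 𝓚] [InnerProductSpace ℂ 𝓚]
    (domT : Submodule ℂ H) (T : domT →ₗ[ℂ] H)
    (Γ₁ : domT →ₗ[ℂ] 𝓗) (Γ₂ : domT →ₗ[ℂ] 𝓚)
    (C : 𝓚 →L[ℂ] 𝓗) (μ : ℂ)
    (hresC : ∀ h : H, ∃! u : domT, Γ₁ u - C (Γ₂ u) = 0 ∧ T u = μ • (u : H) + h) :
    ∀ u : domT, T u = μ • (u : H) → Γ₁ u = 0 → Γ₂ u = 0 → (u : H) = 0 := by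
  intro u hT hΓ₁ hΓ₂
  -- `u` and `0` both lie in `ker (A_C - μ)`, which is trivial since `μ ∈ ρ(A_C)`.
  have hu : u = 0 :=
    (hresC 0).unique ⟨by simp [hΓ₁, hΓ₂], by simpa using hT⟩ ⟨by simp, by simp⟩
  simp [hu]

/-- Boundary triplet setting.  If there exists `C ∈ L(𝓚,𝓗)` with
`μ ∈ ρ(A_C)`, `A_C = Ã*|_{ker(Γ₁ - CΓ₂)}` (`hresC`), then the unique
continuation property holds for `Ã* - μ`:
`ker(Ã* - μ) ∩ ker Γ₁ ∩ ker Γ₂ = {0}`. -/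
theorem stmt_16 {H 𝓗 𝓚 : Type*}
    [NormedAddCommGroup H] [InnerProductSpace ℂ H] [CompleteSpace H]
    [NormedAddCommGroup 𝓗] [InnerProductSpace ℂ 𝓗] [CompleteSpace 𝓗]
    [NormedAddCommGroup 𝓚] [InnerProductSpace ℂ 𝓚] [CompleteSpace 𝓚]
    (domT : Submodule ℂ H) (T : domT →ₗ[ℂ] H)
    (Γ₁ : domT →ₗ[ℂ] 𝓗) (Γ₂ : domT →ₗ[ℂ] 𝓚)
    (C : 𝓚 →L[ℂ] 𝓗) (μ : ℂ)
    (hresC : ∀ h : H, ∃! u : domT, Γ₁ u - C (Γ₂ u) = 0 ∧ T u = μ • (u : H) + h) :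
    ∀ u : domT, T u = μ • (u : H) → Γ₁ u = 0 → Γ₂ u = 0 → (u : H) = 0 :=
  stmt_16_general domT T Γ₁ Γ₂ C μ hresC
end

section
/- For the Hain–Lüst type block operator with boundary conditions determined by B = diag(cot β, −cot α), the entries of the 2×2 M-function are m₁₁(λ) = −y₂(1,λ)/(y₂'(1,λ) + cot β · y₂(1,λ)), m₁₂(λ) = m₂₁(λ) = sin α /(y₂'(1,λ) + cot β · y₂(1,λ)), and m₂₂(λ) = sin α cos α + sin²α · (y₁'(1,λ) + cot β · y₁(1,λ))/(y₂'(1,λ) + cot β · y₂(1,λ)), where y₁, y₂ solve −y'' + (q − λ)y + (w²/(λ−u))y = 0 with initial conditions y₁(0) = cos α, y₁'(0) = sin α and y₂(0) = −sin α, y₂'(0) = cos α. -/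
/-!
If `y` solves the reduced equation `-y'' + (q - λ) y + w² / (λ - u) y = 0`, then
`(y, w y / (λ - u))` lies in `ker (Ã* - λ)`, so the defining relation of `M` applies to it.
For `y₂` the vector `(Γ₁ - BΓ₂)` is `(-d₂, 0)`, which yields the first column of `M`; for `y₁` it is
`(-d₁, 1 / sin α)`, which then yields the second column. The entry `m₁₂` simplifies because the
Wronskian `y₁ y₂' - y₂ y₁'` is constant (the reduced equation has no first-order term), hence
equal to its value `cos² α + sin² α = 1` at `0`. Since `y₂'` is only absolutely continuous, the
integration by parts behind this is proved by Fubini on the triangle `{x ≤ s}`.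
-/

open MeasureTheory Set

section

variable {𝕜 : Type*} [RCLike 𝕜] {a b : ℝ}

theorem integral_deriv_mul_primitive_add_integral_mul (hab : a ≤ b) {f f' g : ℝ → 𝕜}
    (hf : ∀ x ∈ Icc a b, HasDerivAt f (f' x) x) (hf' : ContinuousOn f' (Icc a b))
    (hg : IntervalIntegrable g volume a b) :
    (∫ x in a..b, f' x * ∫ t in a..x, g t) + ∫ x in a..b, f x * g x
      = f b * ∫ x in a..b, g x := by
  set μ := volume.restrict (Icc a b)
  have hgI : IntegrableOn g (Icc a b) volume := (intervalIntegrable_iff_integrableOn_Icc_of_le hab).mp hg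
  have to_set : ∀ F : ℝ → 𝕜, (∫ x in a..b, F x) = ∫ x in Icc a b, F x := fun F => by
    rw [intervalIntegral.integral_of_le hab, integral_Icc_eq_integral_Ioc]
  set k : ℝ → ℝ → 𝕜 := fun s x => if x ≤ s then f' s * g x else 0
  have hk : Integrable (Function.uncurry k) (μ.prod μ) := by
    have : Function.uncurry k = {p : ℝ × ℝ | p.2 ≤ p.1}.indicator (fun p => f' p.1 * g p.2) := by
      ext p; simp [k, Function.uncurry, indicator_apply]
    rw [this]
    exact (hf'.integrableOn_Icc.mul_prod hgI).indicator
      (measurableSet_le measurable_snd measurable_fst)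
  have inner_x : ∀ s ∈ Icc a b, ∫ x, k s x ∂μ = f' s * ∫ t in a..s, g t := by
    intro s hs
    have : (fun x => k s x) = (Iic s).indicator (fun x => f' s * g x) := by
      ext x; simp [k, indicator_apply]
    rw [this, integral_indicator measurableSet_Iic, Measure.restrict_restrict measurableSet_Iic,
      show Iic s ∩ Icc a b = Icc a s by ext; simp only [mem_inter_iff, mem_Iic, mem_Icc]; grind,
      integral_Icc_eq_integral_Ioc,
      ← intervalIntegral.integral_of_le hs.1, intervalIntegral.integral_const_mul]
  have inner_s : ∀ x ∈ Icc a b, ∫ s, k s x ∂μ = (f b - f x) * g x := by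
    intro x hx
    have : (fun s => k s x) = (Ici x).indicator (fun s => f' s * g x) := by
      ext s; simp [k, indicator_apply]
    have hsub : uIcc x b ⊆ Icc a b := by
      rw [uIcc_of_le hx.2]; exact Icc_subset_Icc hx.1 le_rfl
    rw [this, integral_indicator measurableSet_Ici, Measure.restrict_restrict measurableSet_Ici,
      show Ici x ∩ Icc a b = Icc x b by ext; simp only [mem_inter_iff, mem_Ici, mem_Icc]; grind,
      integral_Icc_eq_integral_Ioc,
      ← intervalIntegral.integral_of_le hx.2, intervalIntegral.integral_mul_const,
      intervalIntegral.integral_eq_sub_of_hasDerivAt (fun t ht => hf t (hsub ht))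
        ((hf'.mono hsub).intervalIntegrable)]
  have hfc : ContinuousOn f (Icc a b) := fun x hx => (hf x hx).continuousAt.continuousWithinAt
  calc (∫ x in a..b, f' x * ∫ t in a..x, g t) + ∫ x in a..b, f x * g x
      = (∫ s, ∫ x, k s x ∂μ ∂μ) + ∫ x in Icc a b, f x * g x := by
        rw [to_set, to_set, setIntegral_congr_fun measurableSet_Icc inner_x]
    _ = (∫ x in Icc a b, (f b - f x) * g x) + ∫ x in Icc a b, f x * g x := by
        rw [integral_integral_swap hk, setIntegral_congr_fun measurableSet_Icc inner_s]
    _ = ∫ x in Icc a b, f b * g x := by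
        have h₁ : IntegrableOn (fun x => (f b - f x) * g x) (Icc a b) :=
          hgI.continuousOn_mul (continuousOn_const.sub hfc) isCompact_Icc
        rw [← integral_add h₁ (hgI.continuousOn_mul hfc isCompact_Icc)]
        simp only [sub_mul, sub_add_cancel]
    _ = f b * ∫ x in a..b, g x := by rw [integral_const_mul, to_set]

/-- The regularity of `y ∈ H²(a, b)`: `y'` is a classical derivative of `y` and is absolutely
continuous with a.e. derivative `y''`. -/
structure HasWeakSecondDeriv (y y' y'' : ℝ → 𝕜) (a b : ℝ) : Prop where
  hasDerivAt : ∀ x ∈ Icc a b, HasDerivAt y (y' x) x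
  intervalIntegrable : IntervalIntegrable y'' volume a b
  eq_add_integral : ∀ x ∈ Icc a b, y' x = y' a + ∫ t in a..x, y'' t

namespace HasWeakSecondDeriv

variable {y y' y'' : ℝ → 𝕜}

theorem continuousOn_deriv (hy : HasWeakSecondDeriv y y' y'' a b) :
    ContinuousOn y' (Icc a b) :=
  ((continuousOn_const.add (intervalIntegral.continuousOn_primitive_interval'
    hy.intervalIntegrable left_mem_uIcc)).mono Icc_subset_uIcc).congr hy.eq_add_integral

theorem mul_deriv_eq (hy : HasWeakSecondDeriv y y' y'' a b) (hab : a ≤ b) {f f' : ℝ → 𝕜}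
    (hf : ∀ x ∈ Icc a b, HasDerivAt f (f' x) x) (hf' : ContinuousOn f' (Icc a b)) :
    f b * y' b = f a * y' a + (∫ x in a..b, f' x * y' x) + ∫ x in a..b, f x * y'' x := by
  have hsub : uIcc a b ⊆ Icc a b := (uIcc_of_le hab).subset
  have hf'y' : (∫ x in a..b, f' x * ∫ t in a..x, y'' t)
      = (∫ x in a..b, f' x * y' x) - (f b - f a) * y' a := by
    rw [← intervalIntegral.integral_eq_sub_of_hasDerivAt (fun x hx => hf x (hsub hx))
      ((hf'.mono hsub).intervalIntegrable), ← intervalIntegral.integral_mul_const]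
    have hf'y'_int : IntervalIntegrable (fun x => f' x * y' x) volume a b :=
      ((hf'.mul hy.continuousOn_deriv).mono hsub).intervalIntegrable
    have hf'_int : IntervalIntegrable (fun x => f' x * y' a) volume a b :=
      ((hf'.mul continuousOn_const).mono hsub).intervalIntegrable
    rw [← intervalIntegral.integral_sub hf'y'_int hf'_int]
    refine intervalIntegral.integral_congr fun x hx => ?_
    simp only [hy.eq_add_integral x (hsub hx)]
    ring
  have := integral_deriv_mul_primitive_add_integral_mul hab hf hf' hy.intervalIntegrable
  rw [hf'y', ← sub_eq_of_eq_add' (hy.eq_add_integral b ⟨hab, le_rfl⟩)] at this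
  linear_combination -this

theorem wronskian_sub_eq_integral {z z' z'' : ℝ → 𝕜} (hy : HasWeakSecondDeriv y y' y'' a b)
    (hz : HasWeakSecondDeriv z z' z'' a b) (hab : a ≤ b) :
    (y b * z' b - z b * y' b) - (y a * z' a - z a * y' a)
      = (∫ x in a..b, y x * z'' x) - ∫ x in a..b, z x * y'' x := by
  have hyz := hz.mul_deriv_eq hab hy.hasDerivAt hy.continuousOn_deriv
  have hzy := hy.mul_deriv_eq hab hz.hasDerivAt hz.continuousOn_deriv
  simp only [mul_comm (z' _) (y' _)] at hzy
  linear_combination hyz - hzy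

theorem wronskian_eq {z z' z'' c : ℝ → 𝕜} (hy : HasWeakSecondDeriv y y' y'' a b)
    (hz : HasWeakSecondDeriv z z' z'' a b) (hab : a ≤ b)
    (hyc : ∀ᵐ x ∂volume.restrict (Icc a b), y'' x = c x * y x)
    (hzc : ∀ᵐ x ∂volume.restrict (Icc a b), z'' x = c x * z x) :
    y b * z' b - z b * y' b = y a * z' a - z a * y' a := by
  have hint : (∫ x in a..b, y x * z'' x) = ∫ x in a..b, z x * y'' x := by
    refine intervalIntegral.integral_congr_ae ?_
    filter_upwards [(ae_restrict_iff' measurableSet_Icc).mp hyc,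
      (ae_restrict_iff' measurableSet_Icc).mp hzc] with x hyx hzx hx
    rw [uIoc_of_le hab] at hx
    rw [hyx (Ioc_subset_Icc_self hx), hzx (Ioc_subset_Icc_self hx)]
    ring
  linear_combination hy.wronskian_sub_eq_integral hz hab + hint

end HasWeakSecondDeriv

end

theorem Matrix.fin_two_entries_of_mulVec {K : Type*} [Field K] (M : Matrix (Fin 2) (Fin 2) K)
    {d₁ d₂ s a₁ b₁ a₂ b₂ : K} (hs : s ≠ 0) (hd : d₂ ≠ 0)
    (h₁ : M.mulVec ![-d₁, s⁻¹] = ![a₁, b₁]) (h₂ : M.mulVec ![-d₂, 0] = ![a₂, b₂]) :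
    M 0 0 = -a₂ / d₂ ∧ M 1 0 = -b₂ / d₂ ∧
      M 0 1 = s * (a₁ * d₂ - a₂ * d₁) / d₂ ∧ M 1 1 = s * (b₁ * d₂ - b₂ * d₁) / d₂ := by
  have e₁₀ := congrFun h₁ 0
  have e₁₁ := congrFun h₁ 1
  have e₂₀ := congrFun h₂ 0
  have e₂₁ := congrFun h₂ 1
  simp only [Matrix.mulVec, dotProduct, Fin.sum_univ_two, Matrix.cons_val_zero,
    Matrix.cons_val_one] at e₁₀ e₁₁ e₂₀ e₂₁
  have hss := mul_inv_cancel₀ hs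
  refine ⟨?_, ?_, ?_, ?_⟩ <;> field_simp
  · linear_combination -e₂₀
  · linear_combination -e₂₁
  · linear_combination s * d₂ * e₁₀ - s * d₁ * e₂₀ - M 0 1 * d₂ * hss
  · linear_combination s * d₂ * e₁₁ - s * d₁ * e₂₁ - M 1 1 * d₂ * hss

theorem hainLust_kernel_of_reduced {q u w l y y'' : ℂ} (hl : l - u ≠ 0)
    (h : -y'' + (q - l) * y + w ^ 2 / (l - u) * y = 0) :
    -y'' + q * y + w * (w * y / (l - u)) = l * y ∧
      w * y + u * (w * y / (l - u)) = l * (w * y / (l - u)) := by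
  constructor
  · linear_combination h
  · field_simp
    ring

theorem stmt_19_general (q u w : ℝ → ℝ)
    (l : ℂ) (δ : ℝ) (hδ : 0 < δ)
    (hess : ∀ᵐ x ∂(volume.restrict (Set.Icc (0:ℝ) 1)), δ ≤ ‖l - (u x : ℂ)‖)
    (α β : ℝ) (hsα : Real.sin α ≠ 0)
    (M : Matrix (Fin 2) (Fin 2) ℂ)
    -- `M` is the `M`-function: for every kernel element `(y, z)` of `Ã* - λ`,
    -- `M ((Γ₁ - BΓ₂)(y,z)) = Γ₂(y,z)`.
    (hM : ∀ y y' y'' z : ℝ → ℂ,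
      (∀ x ∈ Set.Icc (0:ℝ) 1, HasDerivAt y (y' x) x) →
      IntervalIntegrable y'' volume 0 1 →
      (∀ x ∈ Set.Icc (0:ℝ) 1, y' x = y' 0 + ∫ t in (0:ℝ)..x, y'' t) →
      (∀ᵐ x ∂(volume.restrict (Set.Icc (0:ℝ) 1)),
        -y'' x + (q x : ℂ) * y x + (w x : ℂ) * z x = l * y x ∧
        (w x : ℂ) * y x + (u x : ℂ) * z x = l * z x) →
      M.mulVec
        ![-(y' 1) - ((Real.cos β / Real.sin β : ℝ) : ℂ) * y 1,
          y' 0 + ((Real.cos α / Real.sin α : ℝ) : ℂ) * y 0]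
        = ![y 1, y 0])
    (y₁ y₁' y₁'' y₂ y₂' y₂'' : ℝ → ℂ)
    (hy₁1 : ∀ x ∈ Set.Icc (0:ℝ) 1, HasDerivAt y₁ (y₁' x) x)
    (hy₁2 : IntervalIntegrable y₁'' volume 0 1)
    (hy₁3 : ∀ x ∈ Set.Icc (0:ℝ) 1, y₁' x = y₁' 0 + ∫ t in (0:ℝ)..x, y₁'' t)
    (hy₁ode : ∀ᵐ x ∂(volume.restrict (Set.Icc (0:ℝ) 1)),
      -y₁'' x + ((q x : ℂ) - l) * y₁ x + ((w x : ℂ) ^ 2 / (l - (u x : ℂ))) * y₁ x = 0)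
    (hy₁ic : y₁ 0 = (Real.cos α : ℂ) ∧ y₁' 0 = (Real.sin α : ℂ))
    (hy₂1 : ∀ x ∈ Set.Icc (0:ℝ) 1, HasDerivAt y₂ (y₂' x) x)
    (hy₂2 : IntervalIntegrable y₂'' volume 0 1)
    (hy₂3 : ∀ x ∈ Set.Icc (0:ℝ) 1, y₂' x = y₂' 0 + ∫ t in (0:ℝ)..x, y₂'' t)
    (hy₂ode : ∀ᵐ x ∂(volume.restrict (Set.Icc (0:ℝ) 1)),
      -y₂'' x + ((q x : ℂ) - l) * y₂ x + ((w x : ℂ) ^ 2 / (l - (u x : ℂ))) * y₂ x = 0)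
    (hy₂ic : y₂ 0 = -(Real.sin α : ℂ) ∧ y₂' 0 = (Real.cos α : ℂ))
    (hd : y₂' 1 + ((Real.cos β / Real.sin β : ℝ) : ℂ) * y₂ 1 ≠ 0) :
    M 0 0 = -(y₂ 1) / (y₂' 1 + ((Real.cos β / Real.sin β : ℝ) : ℂ) * y₂ 1) ∧
    M 0 1 = (Real.sin α : ℂ) / (y₂' 1 + ((Real.cos β / Real.sin β : ℝ) : ℂ) * y₂ 1) ∧
    M 1 0 = (Real.sin α : ℂ) / (y₂' 1 + ((Real.cos β / Real.sin β : ℝ) : ℂ) * y₂ 1) ∧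
    M 1 1 = ((Real.sin α * Real.cos α : ℝ) : ℂ) + ((Real.sin α : ℂ)) ^ 2 *
      ((y₁' 1 + ((Real.cos β / Real.sin β : ℝ) : ℂ) * y₁ 1)
        / (y₂' 1 + ((Real.cos β / Real.sin β : ℝ) : ℂ) * y₂ 1)) := by
  have pyth : (Real.cos α : ℂ) ^ 2 + (Real.sin α : ℂ) ^ 2 = 1 := by
    exact_mod_cast Real.cos_sq_add_sin_sq α
  set cotβ : ℂ := ((Real.cos β / Real.sin β : ℝ) : ℂ)
  set s : ℂ := (Real.sin α : ℂ)
  set c : ℂ := (Real.cos α : ℂ)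
  have hs : s ≠ 0 := Complex.ofReal_ne_zero.mpr hsα
  have hlu : ∀ᵐ x ∂(volume.restrict (Icc (0:ℝ) 1)), l - (u x : ℂ) ≠ 0 := by
    filter_upwards [hess] with x hx h0
    rw [h0, norm_zero] at hx
    linarith
  have hy₁ : HasWeakSecondDeriv y₁ y₁' y₁'' 0 1 := ⟨hy₁1, hy₁2, hy₁3⟩
  have hy₂ : HasWeakSecondDeriv y₂ y₂' y₂'' 0 1 := ⟨hy₂1, hy₂2, hy₂3⟩
  have boundary : ∀ {y y' y''}, HasWeakSecondDeriv y y' y'' 0 1 →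
      (∀ᵐ x ∂(volume.restrict (Icc (0:ℝ) 1)),
        -y'' x + ((q x : ℂ) - l) * y x + ((w x : ℂ) ^ 2 / (l - (u x : ℂ))) * y x = 0) →
      M.mulVec ![-(y' 1) - cotβ * y 1, y' 0 + c / s * y 0] = ![y 1, y 0] := by
    intro y y' y'' hy hode
    have := hM y y' y'' (fun x => w x * y x / (l - u x)) hy.1 hy.2 hy.3
      (by filter_upwards [hode, hlu] with x h hl using hainLust_kernel_of_reduced hl h)
    rwa [Complex.ofReal_div] at this
  have hW : y₁ 1 * y₂' 1 - y₂ 1 * y₁' 1 = 1 := by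
    rw [hy₁.wronskian_eq hy₂ zero_le_one (c := fun x => q x - l + w x ^ 2 / (l - u x))
      (by filter_upwards [hy₁ode] with x hx; linear_combination -hx)
      (by filter_upwards [hy₂ode] with x hx; linear_combination -hx),
      hy₁ic.1, hy₁ic.2, hy₂ic.1, hy₂ic.2]
    linear_combination pyth
  have E₁ : M.mulVec ![-(y₁' 1 + cotβ * y₁ 1), s⁻¹] = ![y₁ 1, c] := by
    have v : s + c / s * c = s⁻¹ := by field_simp; linear_combination pyth
    simpa only [hy₁ic, v, neg_add'] using boundary hy₁ hy₁ode
  have E₂ : M.mulVec ![-(y₂' 1 + cotβ * y₂ 1), 0] = ![y₂ 1, -s] := by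
    have v : c + c / s * -s = 0 := by field_simp; ring
    simpa only [hy₂ic, v, neg_add'] using boundary hy₂ hy₂ode
  obtain ⟨h₀₀, h₁₀, h₀₁, h₁₁⟩ := M.fin_two_entries_of_mulVec hs hd E₁ E₂
  refine ⟨h₀₀, ?_, ?_, ?_⟩
  · rw [h₀₁, show y₁ 1 * (y₂' 1 + cotβ * y₂ 1) - y₂ 1 * (y₁' 1 + cotβ * y₁ 1) = 1 by
      linear_combination hW, mul_one]
  · rw [h₁₀, neg_neg]
  · rw [h₁₁, Complex.ofReal_mul]
    field_simp
    ring

/-- The Hain–Lüst type block operator `Ã*(y,z) = (-y'' + qy + wz, wy + uz)` on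
`H²(0,1) × L²(0,1)` with boundary operators `Γ₁(y,z) = (-y'(1), y'(0))`,
`Γ₂(y,z) = (y(1), y(0))` and `B = diag(cot β, -cot α)`; `λ ∉ essran(u)`
(`hess`).  `M` is the `2×2` `M`-function: `M(Γ₁ - BΓ₂)(y,z) = Γ₂(y,z)` for every
`(y,z) ∈ ker(Ã* - λ)` (`hM`).  Let `y₁, y₂` solve
`-y'' + (q-λ)y + (w²/(λ-u))y = 0` with `y₁(0) = cos α, y₁'(0) = sin α` and
`y₂(0) = -sin α, y₂'(0) = cos α`, and suppose the denominator
`d = y₂'(1) + cot β · y₂(1)` is nonzero.  Then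
`m₁₁ = -y₂(1)/d`, `m₁₂ = m₂₁ = sin α / d`, and
`m₂₂ = sin α cos α + sin²α (y₁'(1) + cot β y₁(1))/d`. -/
theorem stmt_19 (q u w : ℝ → ℝ)
    (hq : Measurable q) (hu : Measurable u) (hw : Measurable w)
    (hqb : ∃ Cq : ℝ, ∀ᵐ x ∂(volume.restrict (Set.Icc (0:ℝ) 1)), |q x| ≤ Cq)
    (hub : ∃ Cu : ℝ, ∀ᵐ x ∂(volume.restrict (Set.Icc (0:ℝ) 1)), |u x| ≤ Cu)
    (hwb : ∃ Cw : ℝ, ∀ᵐ x ∂(volume.restrict (Set.Icc (0:ℝ) 1)), |w x| ≤ Cw)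
    (l : ℂ) (δ : ℝ) (hδ : 0 < δ)
    (hess : ∀ᵐ x ∂(volume.restrict (Set.Icc (0:ℝ) 1)), δ ≤ ‖l - (u x : ℂ)‖)
    (α β : ℝ) (hsα : Real.sin α ≠ 0) (hsβ : Real.sin β ≠ 0)
    (M : Matrix (Fin 2) (Fin 2) ℂ)
    -- `M` is the `M`-function: for every kernel element `(y, z)` of `Ã* - λ`,
    -- `M ((Γ₁ - BΓ₂)(y,z)) = Γ₂(y,z)`.
    (hM : ∀ y y' y'' z : ℝ → ℂ,
      (∀ x ∈ Set.Icc (0:ℝ) 1, HasDerivAt y (y' x) x) →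
      IntervalIntegrable y'' volume 0 1 →
      (∀ x ∈ Set.Icc (0:ℝ) 1, y' x = y' 0 + ∫ t in (0:ℝ)..x, y'' t) →
      (∀ᵐ x ∂(volume.restrict (Set.Icc (0:ℝ) 1)),
        -y'' x + (q x : ℂ) * y x + (w x : ℂ) * z x = l * y x ∧
        (w x : ℂ) * y x + (u x : ℂ) * z x = l * z x) →
      M.mulVec
        ![-(y' 1) - ((Real.cos β / Real.sin β : ℝ) : ℂ) * y 1,
          y' 0 + ((Real.cos α / Real.sin α : ℝ) : ℂ) * y 0]
        = ![y 1, y 0])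
    (y₁ y₁' y₁'' y₂ y₂' y₂'' : ℝ → ℂ)
    (hy₁1 : ∀ x ∈ Set.Icc (0:ℝ) 1, HasDerivAt y₁ (y₁' x) x)
    (hy₁2 : IntervalIntegrable y₁'' volume 0 1)
    (hy₁3 : ∀ x ∈ Set.Icc (0:ℝ) 1, y₁' x = y₁' 0 + ∫ t in (0:ℝ)..x, y₁'' t)
    (hy₁ode : ∀ᵐ x ∂(volume.restrict (Set.Icc (0:ℝ) 1)),
      -y₁'' x + ((q x : ℂ) - l) * y₁ x + ((w x : ℂ) ^ 2 / (l - (u x : ℂ))) * y₁ x = 0)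
    (hy₁ic : y₁ 0 = (Real.cos α : ℂ) ∧ y₁' 0 = (Real.sin α : ℂ))
    (hy₂1 : ∀ x ∈ Set.Icc (0:ℝ) 1, HasDerivAt y₂ (y₂' x) x)
    (hy₂2 : IntervalIntegrable y₂'' volume 0 1)
    (hy₂3 : ∀ x ∈ Set.Icc (0:ℝ) 1, y₂' x = y₂' 0 + ∫ t in (0:ℝ)..x, y₂'' t)
    (hy₂ode : ∀ᵐ x ∂(volume.restrict (Set.Icc (0:ℝ) 1)),
      -y₂'' x + ((q x : ℂ) - l) * y₂ x + ((w x : ℂ) ^ 2 / (l - (u x : ℂ))) * y₂ x = 0)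
    (hy₂ic : y₂ 0 = -(Real.sin α : ℂ) ∧ y₂' 0 = (Real.cos α : ℂ))
    (hd : y₂' 1 + ((Real.cos β / Real.sin β : ℝ) : ℂ) * y₂ 1 ≠ 0) :
    M 0 0 = -(y₂ 1) / (y₂' 1 + ((Real.cos β / Real.sin β : ℝ) : ℂ) * y₂ 1) ∧
    M 0 1 = (Real.sin α : ℂ) / (y₂' 1 + ((Real.cos β / Real.sin β : ℝ) : ℂ) * y₂ 1) ∧
    M 1 0 = (Real.sin α : ℂ) / (y₂' 1 + ((Real.cos β / Real.sin β : ℝ) : ℂ) * y₂ 1) ∧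
    M 1 1 = ((Real.sin α * Real.cos α : ℝ) : ℂ) + ((Real.sin α : ℂ)) ^ 2 *
      ((y₁' 1 + ((Real.cos β / Real.sin β : ℝ) : ℂ) * y₁ 1)
        / (y₂' 1 + ((Real.cos β / Real.sin β : ℝ) : ℂ) * y₂ 1)) :=
  stmt_19_general q u w l δ hδ hess α β hsα M hM y₁ y₁' y₁'' y₂ y₂' y₂'' hy₁1 hy₁2 hy₁3 hy₁ode hy₁ic
    hy₂1 hy₂2 hy₂3 hy₂ode hy₂ic hd
end
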